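/- Let f be a discrete Morse-Bott function on a finite abstract simplicial complex K, C a collection for f with common f-value v, and C^red its reduced collection. If σ lies in the closure of C^red but not in C^red and f(σ) = v, then σ ∈ C and σ is not downward noncritical with respect to C. -/

import Mathlib

open Finset

noncomputable section
open scoped Classical

/-- `σ` is a facet of `τ`: `σ ⊆ τ` and `dim σ = dim τ − 1`. -/
def Facet (σ τ : Finset ℕ) : Prop := σ ⊆ τ ∧ σ.card + 1 = τ.card

/-- A finite abstract simplicial complex: a finite family of nonempty finite sets
closed under taking nonempty subsets. -/
def IsComplex (K : Finset (Finset ℕ)) : Prop :=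
  (∀ σ ∈ K, σ.Nonempty) ∧ ∀ σ ∈ K, ∀ ν, ν ⊆ σ → ν.Nonempty → ν ∈ K

/-- The closure of a set of cells: all nonempty subsets of its cells. -/
def closureOf (S : Finset (Finset ℕ)) : Finset (Finset ℕ) :=
  S.biUnion fun σ => σ.powerset.filter fun ν => ν ≠ ∅

/-- The graph on `C` joining two cells whenever their closures intersect is connected. -/
def ConnectedOn (C : Finset (Finset ℕ)) : Prop :=
  ∀ a ∈ C, ∀ b ∈ C,
    Relation.ReflTransGen
      (fun x y => x ∈ C ∧ y ∈ C ∧ (closureOf {x} ∩ closureOf {y}).Nonempty) a b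

/-- A nonempty set of cells of `K`, all with the same `f`-value, whose
closure-intersection graph is connected. -/
def IsPreCollection (K : Finset (Finset ℕ)) (f : Finset ℕ → ℝ) (C : Finset (Finset ℕ)) :
    Prop :=
  C ⊆ K ∧ C.Nonempty ∧ (∀ σ ∈ C, ∀ τ ∈ C, f σ = f τ) ∧ ConnectedOn C

/-- A collection for `f`: a maximal constant-value connected set of cells. -/
def IsCollection (K : Finset (Finset ℕ)) (f : Finset ℕ → ℝ) (C : Finset (Finset ℕ)) :
    Prop :=
  IsPreCollection K f C ∧ ∀ C', IsPreCollection K f C' → C ⊆ C' → C' = C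

/-- `#{τ ∉ C : σ < τ, f(τ) < f(σ)}`. -/
def UpCount (K : Finset (Finset ℕ)) (f : Finset ℕ → ℝ) (C : Finset (Finset ℕ))
    (σ : Finset ℕ) : ℕ :=
  (K.filter fun τ => τ ∉ C ∧ Facet σ τ ∧ f τ < f σ).card

/-- `#{ν ∉ C : ν < σ, f(ν) > f(σ)}`. -/
def DownCount (K : Finset (Finset ℕ)) (f : Finset ℕ → ℝ) (C : Finset (Finset ℕ))
    (σ : Finset ℕ) : ℕ :=
  (K.filter fun ν => ν ∉ C ∧ Facet ν σ ∧ f σ < f ν).card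

/-- A discrete Morse-Bott function on `K`. -/
def IsMorseBott (K : Finset (Finset ℕ)) (f : Finset ℕ → ℝ) : Prop :=
  ∀ C, IsCollection K f C → ∀ σ ∈ C, UpCount K f C σ ≤ 1 ∧ DownCount K f C σ ≤ 1

/-- `σ` is upward noncritical w.r.t. `C`. -/
def UpNoncrit (K : Finset (Finset ℕ)) (f : Finset ℕ → ℝ) (C : Finset (Finset ℕ))
    (σ : Finset ℕ) : Prop :=
  ∃ w ∈ K, w ∉ C ∧ Facet σ w ∧ f w < f σ

/-- `σ` is downward noncritical w.r.t. `C`. -/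
def DownNoncrit (K : Finset (Finset ℕ)) (f : Finset ℕ → ℝ) (C : Finset (Finset ℕ))
    (σ : Finset ℕ) : Prop :=
  ∃ w ∈ K, w ∉ C ∧ Facet w σ ∧ f σ < f w

/-- The reduced collection `C^red`: the cells of `C` that are neither upward nor
downward noncritical w.r.t. `C`. -/
def reducedOf (K : Finset (Finset ℕ)) (f : Finset ℕ → ℝ) (C : Finset (Finset ℕ)) :
    Finset (Finset ℕ) :=
  C.filter fun σ => ¬ UpNoncrit K f C σ ∧ ¬ DownNoncrit K f C σ

/-- A noncritical pair: a two-element set `{σ, τ}` with `σ < τ` and `f σ ≥ f τ`. -/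
def IsNoncritPair (f : Finset ℕ → ℝ) (S : Finset (Finset ℕ)) : Prop :=
  ∃ σ τ, Facet σ τ ∧ f τ ≤ f σ ∧ S = {σ, τ}

/-- A discrete Morse function in Forman's sense. -/
def IsDiscreteMorse (K : Finset (Finset ℕ)) (g : Finset ℕ → ℝ) : Prop :=
  ∀ σ ∈ K, (K.filter fun τ => Facet σ τ ∧ g τ ≤ g σ).card ≤ 1 ∧
    (K.filter fun ν => Facet ν σ ∧ g σ ≤ g ν).card ≤ 1

/-- A critical cell of `g`. -/
def IsCritical (K : Finset (Finset ℕ)) (g : Finset ℕ → ℝ) (σ : Finset ℕ) : Prop :=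
  σ ∈ K ∧ (K.filter fun τ => Facet σ τ ∧ g τ ≤ g σ).card = 0 ∧
    (K.filter fun ν => Facet ν σ ∧ g σ ≤ g ν).card = 0

/-! `σ` is a face of some `τ ∈ C^red`; having the value of `C`, it is absorbed into `C` by
maximality. If a facet `u` of `σ` had a larger value, the Morse-Bott condition on cofacets would
carry that larger value up to a facet of `τ` outside `C`, making `τ` downward noncritical. -/

lemma mem_closureOf {S : Finset (Finset ℕ)} {σ : Finset ℕ} :
    σ ∈ closureOf S ↔ ∃ τ ∈ S, σ ⊆ τ ∧ σ.Nonempty := by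
  simp [closureOf, Finset.nonempty_iff_ne_empty]

lemma ConnectedOn.insert_of_inter_nonempty {C : Finset (Finset ℕ)} (hC : ConnectedOn C)
    {σ τ : Finset ℕ} (hτ : τ ∈ C) (hστ : (closureOf {σ} ∩ closureOf {τ}).Nonempty) :
    ConnectedOn (insert σ C) := by
  set R := fun x y => x ∈ insert σ C ∧ y ∈ insert σ C ∧
    (closureOf {x} ∩ closureOf {y}).Nonempty
  have lift : ∀ a ∈ C, ∀ b ∈ C, Relation.ReflTransGen R a b := fun a ha b hb =>
    Relation.ReflTransGen.mono (fun x y ⟨hx, hy, hxy⟩ =>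
      ⟨mem_insert_of_mem hx, mem_insert_of_mem hy, hxy⟩) a b (hC a ha b hb)
  have to_τ : Relation.ReflTransGen R σ τ :=
    .single ⟨mem_insert_self _ _, mem_insert_of_mem hτ, hστ⟩
  have from_τ : Relation.ReflTransGen R τ σ :=
    .single ⟨mem_insert_of_mem hτ, mem_insert_self _ _, by rwa [inter_comm]⟩
  intro a ha b hb
  rcases mem_insert.mp ha with rfl | haC <;> rcases mem_insert.mp hb with rfl | hbC
  · exact .refl
  · exact to_τ.trans (lift τ hτ b hbC)
  · exact (lift a haC τ hτ).trans from_τ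
  · exact lift a haC b hbC

lemma IsCollection.mem_of_subset {K C : Finset (Finset ℕ)} {f : Finset ℕ → ℝ}
    (hC : IsCollection K f C) {σ τ : Finset ℕ} (hτ : τ ∈ C) (hσK : σ ∈ K) (hστ : σ ⊆ τ)
    (hσ : σ.Nonempty) (hfσ : f σ = f τ) : σ ∈ C := by
  obtain ⟨⟨hCK, -, hCf, hCconn⟩, hCmax⟩ := hC
  have hval : ∀ a ∈ insert σ C, f a = f τ := by
    intro a ha
    rcases mem_insert.mp ha with rfl | ha
    exacts [hfσ, hCf a ha τ hτ]
  have hcommon : σ ∈ closureOf {σ} ∩ closureOf {τ} := by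
    simp only [mem_inter, mem_closureOf, mem_singleton, exists_eq_left]
    exact ⟨⟨subset_rfl, hσ⟩, hστ, hσ⟩
  have hpre : IsPreCollection K f (insert σ C) :=
    ⟨insert_subset hσK hCK, insert_nonempty σ C,
      fun a ha b hb => (hval a ha).trans (hval b hb).symm,
      hCconn.insert_of_inter_nonempty hτ ⟨σ, hcommon⟩⟩
  exact hCmax _ hpre (subset_insert σ C) ▸ mem_insert_self σ C

lemma exists_isCollection_mem {K : Finset (Finset ℕ)} (f : Finset ℕ → ℝ) {m : Finset ℕ}
    (hm : m ∈ K) : ∃ D, IsCollection K f D ∧ m ∈ D := by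
  set T := K.powerset.filter fun D => IsPreCollection K f D ∧ m ∈ D
  have hsingleton : {m} ∈ T := by
    simp only [T, mem_filter, mem_powerset, singleton_subset_iff, mem_singleton]
    refine ⟨hm, ⟨singleton_subset_iff.mpr hm, singleton_nonempty m, ?_, ?_⟩, trivial⟩
    · simp
    · intro a ha b hb
      rw [mem_singleton.mp ha, mem_singleton.mp hb]
  obtain ⟨D, hD, hmax⟩ := T.exists_max_image card ⟨_, hsingleton⟩
  simp only [T, mem_filter, mem_powerset] at hD
  refine ⟨D, ⟨hD.2.1, fun C' hC' hDC' => ?_⟩, hD.2.2⟩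
  have hC'T : C' ∈ T := by
    simp only [T, mem_filter, mem_powerset]
    exact ⟨hC'.1, hC', hDC' hD.2.2⟩
  exact (eq_of_subset_of_card_le hDC' (hmax _ hC'T)).symm

/-- Cofacets of lower value never lie in the collection of `m`, so they are all counted by
`UpCount`. -/
lemma IsMorseBott.card_lower_cofacets_le_one {K : Finset (Finset ℕ)} {f : Finset ℕ → ℝ}
    (hf : IsMorseBott K f) {m : Finset ℕ} (hm : m ∈ K) :
    (K.filter fun w => Facet m w ∧ f w < f m).card ≤ 1 := by
  obtain ⟨D, hD, hmD⟩ := exists_isCollection_mem f hm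
  refine le_trans (card_le_card fun w hw => ?_) (hf D hD m hmD).1
  obtain ⟨hwK, hmw, hfw⟩ := mem_filter.mp hw
  exact mem_filter.mpr ⟨hwK, fun hwD => hfw.ne (hD.1.2.2.1 w hwD m hmD), hmw, hfw⟩

/-- Take a largest face `m ⊇ u` of `τ` with `f τ < f m`: every cofacet of `m` inside `τ` has
value `≤ f τ < f m`, and there is at most one of them, so `m` is a facet of `τ`. -/
lemma IsMorseBott.exists_facet_gt_of_subset {K : Finset (Finset ℕ)} (hK : IsComplex K)
    {f : Finset ℕ → ℝ} (hf : IsMorseBott K f) {τ u : Finset ℕ} (hτ : τ ∈ K) (hu : u ⊆ τ)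
    (hune : u.Nonempty) (hfu : f τ < f u) : ∃ m ∈ K, Facet m τ ∧ f τ < f m := by
  set S := τ.powerset.filter fun w => u ⊆ w ∧ f τ < f w
  have huS : u ∈ S := by simpa [S] using ⟨hu, hfu⟩
  obtain ⟨m, hmS, hmax⟩ := S.exists_max_image card ⟨u, huS⟩
  obtain ⟨hmτ, hum, hfm⟩ : m ⊆ τ ∧ u ⊆ m ∧ f τ < f m := by simpa [S] using hmS
  have hmK : m ∈ K := hK.2 τ hτ m hmτ (hune.mono hum)
  have hmne : m ≠ τ := by rintro rfl; exact hfm.false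
  have hcofacet : ∀ x ∈ τ \ m, insert x m ∈ K.filter fun w => Facet m w ∧ f w < f m := by
    intro x hx
    obtain ⟨hxτ, hxm⟩ := mem_sdiff.mp hx
    have hxmτ : insert x m ⊆ τ := insert_subset hxτ hmτ
    have hfx : f (insert x m) ≤ f τ := by
      by_contra! hgt
      have hins : insert x m ∈ S := by
        simpa [S] using ⟨hxmτ, hum.trans (subset_insert x m), hgt⟩
      have := hmax _ hins
      rw [card_insert_of_notMem hxm] at this
      omega
    refine mem_filter.mpr ⟨hK.2 τ hτ _ hxmτ (insert_nonempty x m),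
      ⟨subset_insert x m, (card_insert_of_notMem hxm).symm⟩, hfx.trans_lt hfm⟩
  have hinj : Set.InjOn (fun x => insert x m) (τ \ m : Finset ℕ) := by
    intro x hx y _ (hxy : insert x m = insert y m)
    have hx' : x ∈ insert y m := hxy ▸ mem_insert_self x m
    exact (mem_insert.mp hx').resolve_right (mem_sdiff.mp hx).2
  have hle : (τ \ m).card ≤ 1 :=
    (card_le_card_of_injOn _ hcofacet hinj).trans (hf.card_lower_cofacets_le_one hmK)
  have hpos : 0 < (τ \ m).card :=
    card_pos.mpr (sdiff_nonempty.mpr fun h => hmne (subset_antisymm hmτ h))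
  have hcard := card_sdiff_add_card_eq_card hmτ
  exact ⟨m, hmK, ⟨hmτ, by omega⟩, hfm⟩

theorem statement4_general (K : Finset (Finset ℕ)) (hK : IsComplex K) (f : Finset ℕ → ℝ)
    (hf : IsMorseBott K f) (C : Finset (Finset ℕ)) (hC : IsCollection K f C)
    (v : ℝ) (hv : ∀ τ ∈ C, f τ = v)
    (σ : Finset ℕ) (h₁ : σ ∈ closureOf (reducedOf K f C))
    (h₃ : f σ = v) :
    σ ∈ C ∧ ¬ DownNoncrit K f C σ := by
  obtain ⟨τ, hτred, hστ, hσne⟩ := mem_closureOf.mp h₁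
  obtain ⟨hτC, -, hτdown⟩ := mem_filter.mp hτred
  have hτK : τ ∈ K := hC.1.1 hτC
  have hfτ : f τ = v := hv τ hτC
  refine ⟨hC.mem_of_subset hτC (hK.2 τ hτK σ hστ hσne) hστ hσne (h₃.trans hfτ.symm), ?_⟩
  rintro ⟨u, huK, -, ⟨huσ, -⟩, hfu⟩
  obtain ⟨m, hmK, hmτ, hfm⟩ :=
    hf.exists_facet_gt_of_subset hK hτK (huσ.trans hστ) (hK.1 u huK) (by rwa [hfτ, ← h₃])
  exact hτdown ⟨m, hmK, fun hmC => hfm.ne (hv m hmC ▸ hfτ), hmτ, hfm⟩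

/-- If `σ` lies in the closure of `C^red` but not in `C^red` and has the
common value `v` of `C`, then `σ ∈ C` and `σ` is not downward noncritical w.r.t. `C`. -/
theorem statement4 (K : Finset (Finset ℕ)) (hK : IsComplex K) (f : Finset ℕ → ℝ)
    (hf : IsMorseBott K f) (C : Finset (Finset ℕ)) (hC : IsCollection K f C)
    (v : ℝ) (hv : ∀ τ ∈ C, f τ = v)
    (σ : Finset ℕ) (h₁ : σ ∈ closureOf (reducedOf K f C)) (h₂ : σ ∉ reducedOf K f C)
    (h₃ : f σ = v) :
    σ ∈ C ∧ ¬ DownNoncrit K f C σ :=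
  statement4_general K hK f hf C hC v hv σ h₁ h₃
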